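/- Fix a system of positive coset-depending weights w. Let 𝒫^{cw} be the set of games c for which there exists P : S → ℝ with c_i(s) = w_i(s_{-i})·(P(s) − (1/k_i)·Σ_{x∈S_i} P(x, s_{-i})) for all i and s (the coset weighted pure potential games), and let 𝒩 be the set of non-strategic games. Then: (a) every element of 𝒫^{cw} is orthogonal to every element of 𝒩 with respect to ⟨c,c'⟩ = Σ_i Σ_s c_i(s)c'_i(s); and (b) the subspace 𝒢_P^{cw} of coset weighted potential games with respect to w equals the (orthogonal) direct sum 𝒫^{cw} ⊕ 𝒩. -/

import Mathlib

/-- `f : S → ℝ` depends only on the strategies of the players other than `i`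
(i.e. it is a function of `s_{-i}`). -/
def IndepOf {n : ℕ} {k : Fin n → ℕ} (i : Fin n) (f : (∀ j, Fin (k j)) → ℝ) : Prop :=
  ∀ (s : ∀ j, Fin (k j)) (x : Fin (k i)), f (Function.update s i x) = f s

/-- `P` is a coset weighted potential function for the game `c` with respect to the
coset-depending weights `w`. -/
def IsCWPotentialFn {n : ℕ} {k : Fin n → ℕ} (c w : Fin n → (∀ j, Fin (k j)) → ℝ)
    (P : (∀ j, Fin (k j)) → ℝ) : Prop :=
  ∀ (i : Fin n) (s : ∀ j, Fin (k j)) (x y : Fin (k i)),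
    c i (Function.update s i x) - c i (Function.update s i y)
      = w i s * (P (Function.update s i x) - P (Function.update s i y))

/-- `c` is a coset weighted potential game with respect to `w`. -/
def IsCWPG {n : ℕ} {k : Fin n → ℕ} (w c : Fin n → (∀ j, Fin (k j)) → ℝ) : Prop :=
  ∃ P, IsCWPotentialFn c w P

/-- `c` is a coset weighted pure potential game w.r.t. `w`:
`c_i(s) = w_i(s_{-i}) (P(s) − (1/k_i) Σ_{x ∈ S_i} P(x, s_{-i}))` for some `P`. -/
def IsCWPurePotential {n : ℕ} {k : Fin n → ℕ}
    (w c : Fin n → (∀ j, Fin (k j)) → ℝ) : Prop :=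
  ∃ P : (∀ j, Fin (k j)) → ℝ, ∀ (i : Fin n) (s : ∀ j, Fin (k j)),
    c i s = w i s * (P s - (1 / (k i : ℝ)) * ∑ x : Fin (k i), P (Function.update s i x))

/-- `c` is a non-strategic game. -/
def IsNonStrategic {n : ℕ} {k : Fin n → ℕ} (c : Fin n → (∀ j, Fin (k j)) → ℝ) : Prop :=
  ∀ (i : Fin n) (s : ∀ j, Fin (k j)) (x y : Fin (k i)),
    c i (Function.update s i x) = c i (Function.update s i y)

/-- The inner product `⟨c, c'⟩ = Σ_i Σ_s c_i(s) c'_i(s)` on the space of games. -/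
noncomputable def gameInner {n : ℕ} {k : Fin n → ℕ}
    (c c' : Fin n → (∀ j, Fin (k j)) → ℝ) : ℝ :=
  ∑ i : Fin n, ∑ s : ∀ j, Fin (k j), c i s * c' i s

/-- `c` is a coset weighted pure harmonic game w.r.t. `w`: it is orthogonal to every
coset weighted potential game w.r.t. `w`. -/
def IsCWPureHarmonic {n : ℕ} {k : Fin n → ℕ}
    (w c : Fin n → (∀ j, Fin (k j)) → ℝ) : Prop :=
  ∀ c' : Fin n → (∀ j, Fin (k j)) → ℝ, IsCWPG w c' → gameInner c c' = 0

/-! The average of `P` over player `i`'s strategies does not depend on `s i`, so every function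
`h` of `s_{-i}` is orthogonal to `P - avgOver i P` (summing over a coset is the same as summing
`k i` times over `S`). This gives the orthogonality of `𝒫^{cw}` and `𝒩`. For the decomposition,
potential functions add along with games, a game with potential `0` is exactly a non-strategic one,
and the pure potential game built from `P` has potential `P`; so `c - p` is non-strategic whenever
`c` and the pure game `p` share the potential `P`. -/

open Finset Function

theorem sum_sum_update_eq_card_nsmul {ι M : Type*} [DecidableEq ι] [Fintype ι]
    [AddCommMonoid M] {α : ι → Type*} [∀ j, Fintype (α j)] (i : ι) (g : (∀ j, α j) → M) :
    ∑ s, ∑ x : α i, g (update s i x) = Fintype.card (α i) • ∑ s, g s := by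
  let swap : (∀ j, α j) × α i → (∀ j, α j) × α i := fun p => (update p.1 i p.2, p.1 i)
  have swap_involutive : Involutive swap := fun p => by
    simp only [swap, update_idem, update_self, update_eq_self]
  calc ∑ s, ∑ x : α i, g (update s i x)
      = ∑ p : (∀ j, α j) × α i, g (swap p).1 := by rw [Fintype.sum_prod_type]
    _ = ∑ p : (∀ j, α j) × α i, g p.1 :=
        Fintype.sum_equiv (swap_involutive.toPerm swap) _ _ fun _ => rfl
    _ = Fintype.card (α i) • ∑ s, g s := by
        rw [Fintype.sum_prod_type, smul_sum]
        simp only [sum_const, card_univ]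

section

variable {n : ℕ} {k : Fin n → ℕ}

noncomputable def avgOver (i : Fin n) (P : (∀ j, Fin (k j)) → ℝ) (s : ∀ j, Fin (k j)) : ℝ :=
  1 / (k i : ℝ) * ∑ x : Fin (k i), P (update s i x)

noncomputable def purePotentialGame (w : Fin n → (∀ j, Fin (k j)) → ℝ)
    (P : (∀ j, Fin (k j)) → ℝ) : Fin n → (∀ j, Fin (k j)) → ℝ :=
  fun i s => w i s * (P s - avgOver i P s)

theorem isCWPurePotential_iff {w c : Fin n → (∀ j, Fin (k j)) → ℝ} :
    IsCWPurePotential w c ↔ ∃ P, c = purePotentialGame w P :=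
  exists_congr fun _ => ⟨fun h => funext₂ h, fun h i s => congrFun₂ h i s⟩

theorem IndepOf.mul {i : Fin n} {f g : (∀ j, Fin (k j)) → ℝ} (hf : IndepOf i f)
    (hg : IndepOf i g) : IndepOf i (f * g) :=
  fun s x => by simp only [Pi.mul_apply, hf s x, hg s x]

theorem indepOf_avgOver (i : Fin n) (P : (∀ j, Fin (k j)) → ℝ) : IndepOf i (avgOver i P) :=
  fun s x => by simp only [avgOver, update_idem]

theorem IsNonStrategic.indepOf {q : Fin n → (∀ j, Fin (k j)) → ℝ} (hq : IsNonStrategic q)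
    (i : Fin n) : IndepOf i (q i) :=
  fun s x => by rw [hq i s x (s i), update_eq_self]

theorem sum_mul_sub_avgOver_eq_zero {i : Fin n} (hk : k i ≠ 0) {h : (∀ j, Fin (k j)) → ℝ}
    (hh : IndepOf i h) (P : (∀ j, Fin (k j)) → ℝ) :
    ∑ s, h s * (P s - avgOver i P s) = 0 := by
  have sum_mul_avgOver : ∑ s, h s * avgOver i P s = ∑ s, h s * P s :=
    calc ∑ s, h s * avgOver i P s
        = 1 / (k i : ℝ) * ∑ s, ∑ x : Fin (k i), (h * P) (update s i x) := by
          simp only [avgOver, Pi.mul_apply, mul_sum]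
          exact sum_congr rfl fun s _ => sum_congr rfl fun x _ => by rw [hh s x]; ring
      _ = ∑ s, h s * P s := by
          rw [sum_sum_update_eq_card_nsmul, Fintype.card_fin, nsmul_eq_mul, ← mul_assoc,
            one_div_mul_cancel (Nat.cast_ne_zero.2 hk), one_mul]
          rfl
  simp only [mul_sub, sum_sub_distrib, sum_mul_avgOver, sub_self]

theorem gameInner_purePotentialGame_eq_zero (hk : ∀ i, k i ≠ 0)
    {w q : Fin n → (∀ j, Fin (k j)) → ℝ} (hwI : ∀ i, IndepOf i (w i)) (hq : IsNonStrategic q)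
    (P : (∀ j, Fin (k j)) → ℝ) : gameInner (purePotentialGame w P) q = 0 := by
  refine sum_eq_zero fun i _ => ?_
  rw [← sum_mul_sub_avgOver_eq_zero (hk i) ((hwI i).mul (hq.indepOf i)) P]
  refine sum_congr rfl fun s _ => ?_
  simp only [purePotentialGame, Pi.mul_apply]
  ring

theorem IsCWPotentialFn.add {c c' w : Fin n → (∀ j, Fin (k j)) → ℝ}
    {P P' : (∀ j, Fin (k j)) → ℝ} (hP : IsCWPotentialFn c w P) (hP' : IsCWPotentialFn c' w P') :
    IsCWPotentialFn (c + c') w (P + P') := fun i s x y => by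
  simp only [Pi.add_apply]
  linear_combination hP i s x y + hP' i s x y

theorem IsCWPotentialFn.sub {c c' w : Fin n → (∀ j, Fin (k j)) → ℝ}
    {P P' : (∀ j, Fin (k j)) → ℝ} (hP : IsCWPotentialFn c w P) (hP' : IsCWPotentialFn c' w P') :
    IsCWPotentialFn (c - c') w (P - P') := fun i s x y => by
  simp only [Pi.sub_apply]
  linear_combination hP i s x y - hP' i s x y

theorem isCWPotentialFn_zero_iff {c w : Fin n → (∀ j, Fin (k j)) → ℝ} :
    IsCWPotentialFn c w 0 ↔ IsNonStrategic c := by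
  simp only [IsCWPotentialFn, IsNonStrategic, Pi.zero_apply, sub_self, mul_zero, sub_eq_zero]

theorem isCWPotentialFn_purePotentialGame {w : Fin n → (∀ j, Fin (k j)) → ℝ}
    (hwI : ∀ i, IndepOf i (w i)) (P : (∀ j, Fin (k j)) → ℝ) :
    IsCWPotentialFn (purePotentialGame w P) w P := fun i s x y => by
  simp only [purePotentialGame, hwI i s, indepOf_avgOver i P s]
  ring

end

theorem cwpg_eq_pure_potential_plus_nonstrategic (n : ℕ) (k : Fin n → ℕ)
    (hk : ∀ i, 2 ≤ k i) (w : Fin n → (∀ j, Fin (k j)) → ℝ)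
    (hwI : ∀ i, IndepOf i (w i)) :
    (∀ p q : Fin n → (∀ j, Fin (k j)) → ℝ,
        IsCWPurePotential w p → IsNonStrategic q → gameInner p q = 0) ∧
    (∀ c : Fin n → (∀ j, Fin (k j)) → ℝ,
        IsCWPG w c ↔ ∃ p q : Fin n → (∀ j, Fin (k j)) → ℝ,
          IsCWPurePotential w p ∧ IsNonStrategic q ∧ c = p + q) := by
  refine ⟨fun p q hp hq => ?_, fun c => ⟨fun ⟨P, hP⟩ => ?_, ?_⟩⟩
  · obtain ⟨P, rfl⟩ := isCWPurePotential_iff.1 hp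
    exact gameInner_purePotentialGame_eq_zero (fun i => Nat.ne_zero_of_lt (hk i)) hwI hq P
  · refine ⟨purePotentialGame w P, c - purePotentialGame w P,
      isCWPurePotential_iff.2 ⟨P, rfl⟩, ?_, by abel⟩
    rw [← isCWPotentialFn_zero_iff, ← sub_self P]
    exact hP.sub (isCWPotentialFn_purePotentialGame hwI P)
  · rintro ⟨p, q, hp, hq, rfl⟩
    obtain ⟨P, rfl⟩ := isCWPurePotential_iff.1 hp
    exact ⟨P + 0, (isCWPotentialFn_purePotentialGame hwI P).add (isCWPotentialFn_zero_iff.2 hq)⟩
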